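/- (Theorem 3.8, lower bound, arithmetic form.) For every 1 ≤ i ≤ c the denominators M_i − m_j (for 1 ≤ j < i) and M_j − m_i (for i < j ≤ c) are positive and ∏_{1≤j<i} m_j/(M_i − m_j) · ∏_{i<j≤c} m_j/(M_j − m_i) ≤ B_i, where B_i is the i-th total Betti number of a reduced arithmetically Cohen–Macaulay divisor of degree d = tc+1−p on a variety of minimal degree of codimension c. -/

import Mathlib

/-!
The Betti numbers are explicit: `B i = i·C(c,i+1) + (p+1-i)·C(c,i-1)` for `i ≤ p` and
`B i = i·C(c,i+1) + (i-p)·C(c,i)` for `i > p`, so the shifts are `m i = i + 1` for `i < c`,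
`M i = t + i - 1` for `i ≤ p`, `M i = t + i` for `i > p`, and `m c = M c`. Every factor of the
product only decreases when `t` grows, so it suffices to treat `t = 2`. There the products
telescope to binomial coefficients, and the inequality becomes `p + 1 ≤ c` (for `i ≤ p < c`),
an equality (for `p = c`), or a crude estimate (for `i > p`).
-/

open Finset

section Products

theorem prod_Ico_one_sub_eq {M : Type*} [CommMonoid M] (f : ℕ → M) (i : ℕ) :
    ∏ j ∈ Ico 1 i, f (i - j) = ∏ j ∈ Ico 1 i, f j := by
  rw [prod_Ico_reflect f 1 (Nat.le_succ i), Nat.add_sub_cancel_left, Nat.add_sub_cancel]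

theorem prod_Ico_div_cast_sub {i : ℕ} (f : ℕ → ℚ) (g : ℚ → ℚ) :
    ∏ j ∈ Ico 1 i, f j / g ((i : ℚ) - j) = ∏ j ∈ Ico 1 i, f j / g j := by
  rw [prod_div_distrib, prod_div_distrib, ← prod_Ico_one_sub_eq (fun j => g j) i]
  congr 1
  refine prod_congr rfl fun j hj => ?_
  rw [Nat.cast_sub (by simp at hj; omega)]

theorem prod_Ico_succ_div_self {i : ℕ} (hi : 1 ≤ i) :
    ∏ j ∈ Ico 1 i, ((j : ℚ) + 1) / j = i := by
  induction i, hi using Nat.le_induction with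
  | base => simp
  | succ i hi ih =>
    have : (i : ℚ) ≠ 0 := by exact_mod_cast (by omega : i ≠ 0)
    rw [prod_Ico_succ_top hi, ih]
    push_cast
    field_simp

theorem cast_choose_mul_succ {b i : ℕ} (h : i ≤ b) :
    (b.choose (i + 1) : ℚ) * (b + 1) = (b + 1).choose (i + 1) * (b - i) := by
  have key := Nat.choose_mul_succ_eq b (i + 1)
  rw [show b + 1 - (i + 1) = b - i by omega] at key
  rw [← Nat.cast_sub h]
  exact_mod_cast key

theorem prod_Ioc_succ_div_sub {i b : ℕ} (h : i ≤ b) :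
    ∏ j ∈ Ioc i b, ((j : ℚ) + 1) / (j - i) = (b + 1).choose (i + 1) := by
  induction b, h using Nat.le_induction with
  | base => simp
  | succ b hib ih =>
    have hpos : (b : ℚ) + 1 - i ≠ 0 := by
      have : (i : ℚ) ≤ b := by exact_mod_cast hib
      linarith
    have key := cast_choose_mul_succ (show i ≤ b + 1 by omega)
    rw [prod_Ioc_succ_top hib, ih]
    push_cast at key ⊢
    field_simp
    linarith

theorem prod_Ioc_succ_div_sub_add_ite {i a b : ℕ} (hia : i ≤ a) (hab : a ≤ b) :
    ∏ j ∈ Ioc i b, ((j : ℚ) + 1) / (j - i + if a < j then 1 else 0) =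
      (b + 1).choose (i + 1) * (a - i + 1) / (b - i + 1) := by
  have hia' : (i : ℚ) ≤ a := by exact_mod_cast hia
  induction b, hab using Nat.le_induction with
  | base =>
    rw [mul_div_assoc, div_self (by linarith), mul_one, ← prod_Ioc_succ_div_sub hia]
    refine prod_congr rfl fun j hj => ?_
    rw [if_neg (by simp at hj; omega), add_zero]
  | succ b hab ih =>
    have hab' : (a : ℚ) ≤ b := by exact_mod_cast hab
    have key := cast_choose_mul_succ (show i ≤ b + 1 by omega)
    rw [prod_Ioc_succ_top (hia.trans hab), ih, if_pos (by omega)]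
    push_cast at key ⊢
    have h1 : (b : ℚ) - i + 1 ≠ 0 := by linarith
    have h2 : (b : ℚ) + 1 - i + 1 ≠ 0 := by linarith
    field_simp
    linear_combination (↑a - ↑i + 1) * key

end Products

section Binomial

theorem mul_choose_pred (c : ℕ) {k : ℕ} (hk : 1 ≤ k) :
    c * (c - 1).choose (k - 1) = k * c.choose k := by
  obtain ⟨k, rfl⟩ : ∃ k', k = k' + 1 := ⟨k - 1, by omega⟩
  cases c with
  | zero => simp
  | succ c => simpa [mul_comm (k + 1)] using Nat.add_one_mul_choose_eq c k

theorem mul_choose_pred_sub_mul_choose_pred_pred (c p : ℕ) {i : ℕ} (hi : 2 ≤ i) :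
    (p : ℤ) * c.choose (i - 1) - c * (c - 1).choose (i - 2) =
      ((p : ℤ) + 1 - i) * c.choose (i - 1) := by
  have key : (c : ℤ) * (c - 1).choose (i - 2) = ((i - 1 : ℕ) : ℤ) * c.choose (i - 1) := by
    have := mul_choose_pred c (k := i - 1) (by omega)
    rw [show i - 1 - 1 = i - 2 by omega] at this
    exact_mod_cast this
  rw [key, Nat.cast_sub (by omega : 1 ≤ i)]
  ring

theorem mul_choose_pred_sub_mul_choose (c p : ℕ) {i : ℕ} (hi : 1 ≤ i) :
    (c : ℤ) * (c - 1).choose (i - 1) - p * c.choose i = ((i : ℤ) - p) * c.choose i := by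
  have key : (c : ℤ) * (c - 1).choose (i - 1) = i * c.choose i := by
    exact_mod_cast mul_choose_pred c hi
  rw [key]
  ring

theorem cast_choose_succ_right {c i : ℕ} (h : i ≤ c) :
    (c.choose (i + 1) : ℚ) = c.choose i * (c - i) / (i + 1) := by
  rw [eq_div_iff (by positivity), ← Nat.cast_sub h]
  exact_mod_cast Nat.choose_succ_right_eq c i

theorem cast_choose_pred_right {c i : ℕ} (h1 : 1 ≤ i) (h : i ≤ c) :
    (c.choose (i - 1) : ℚ) = c.choose i * i / (c - i + 1) := by
  have hc : (i : ℚ) ≤ c := by exact_mod_cast h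
  have key := Nat.choose_succ_right_eq c (i - 1)
  rw [Nat.sub_add_cancel h1] at key
  rw [eq_div_iff (by linarith)]
  have := congrArg (Nat.cast : ℕ → ℚ) key
  push_cast [Nat.cast_sub (show i - 1 ≤ c by omega), Nat.cast_sub h1] at this
  linarith

theorem cast_choose_succ_succ (c i : ℕ) :
    ((c + 1).choose (i + 1) : ℚ) = c.choose i * (c + 1) / (i + 1) := by
  rw [eq_div_iff (by positivity)]
  exact_mod_cast (Nat.add_one_mul_choose_eq c i).symm.trans (by ring)

end Binomial

section Betti

def betaCoeff (c p i : ℕ) : ℤ := if i ≤ p then ((p : ℤ) + 1 - i) * c.choose (i - 1) else 0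

def gammaCoeff (c p i : ℕ) : ℤ := if p < i then ((i : ℤ) - p) * c.choose i else 0

def bettiNumber (c p i : ℕ) : ℤ := i * c.choose (i + 1) + betaCoeff c p i + gammaCoeff c p i

theorem mul_choose_succ_ne_zero_iff {c i : ℕ} (hi : 1 ≤ i) :
    (i : ℤ) * c.choose (i + 1) ≠ 0 ↔ i < c := by
  simp [Nat.choose_eq_zero_iff]
  omega

theorem betaCoeff_ne_zero_iff {c p i : ℕ} (hic : i ≤ c) :
    betaCoeff c p i ≠ 0 ↔ i ≤ p := by
  unfold betaCoeff
  split_ifs with hip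
  · simp only [hip, iff_true]
    have : (0 : ℤ) < (p : ℤ) + 1 - i := by omega
    have := Nat.choose_pos (show i - 1 ≤ c by omega)
    positivity
  · simpa using hip

theorem gammaCoeff_ne_zero_iff {c p i : ℕ} (hic : i ≤ c) :
    gammaCoeff c p i ≠ 0 ↔ p < i := by
  unfold gammaCoeff
  split_ifs with hpi
  · simp only [hpi, iff_true]
    have : (0 : ℤ) < (i : ℤ) - p := by omega
    have := Nat.choose_pos hic
    positivity
  · simpa using hpi

theorem eq_betaCoeff {c p : ℕ} {β' : ℕ → ℤ} (h1 : β' 1 = p)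
    (h : ∀ i, 2 ≤ i → i ≤ p → β' i = p * c.choose (i - 1) - c * (c - 1).choose (i - 2))
    (h0 : ∀ i, p < i → β' i = 0) {i : ℕ} (hi : 1 ≤ i) : β' i = betaCoeff c p i := by
  unfold betaCoeff
  split_ifs with hip
  · rcases hi.eq_or_lt with rfl | hi
    · simp [h1]
    · rw [h i hi hip, mul_choose_pred_sub_mul_choose_pred_pred c p hi]
  · exact h0 i (by omega)

theorem eq_gammaCoeff {c p : ℕ} {γ : ℕ → ℤ} (h0 : ∀ i, i ≤ p → γ i = 0)
    (h : ∀ i, p < i → γ i = c * (c - 1).choose (i - 1) - p * c.choose i) (i : ℕ) :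
    γ i = gammaCoeff c p i := by
  unfold gammaCoeff
  split_ifs with hpi
  · rw [h i hpi, mul_choose_pred_sub_mul_choose c p (by omega)]
  · exact h0 i (by omega)

end Betti

section Shifts

def maxShift (t p j : ℕ) : ℕ := if j ≤ p then t + j - 1 else t + j

def minShift (t p c j : ℕ) : ℕ := if j < c then j + 1 else maxShift t p j

def shiftSet (t p c i : ℕ) : Set ℕ :=
  {x | (i < c ∧ x = i + 1) ∨ (i ≤ p ∧ x = t + i - 1) ∨ (p < i ∧ x = t + i)}

theorem coe_shiftFinset_eq {t p c i : ℕ} {a b g : ℤ} (ha : a ≠ 0 ↔ i < c) (hb : b ≠ 0 ↔ i ≤ p)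
    (hg : g ≠ 0 ↔ p < i) :
    (↑((if a ≠ 0 then ({i + 1} : Finset ℕ) else ∅) ∪ (if b ≠ 0 then {t + i - 1} else ∅) ∪
      (if g ≠ 0 then {t + i} else ∅)) : Set ℕ) = shiftSet t p c i := by
  ext x
  simp only [coe_union, Set.mem_union, mem_coe, apply_ite (x ∈ ·), mem_singleton, notMem_empty,
    if_false_right, ha, hb, hg, or_assoc]
  rfl

theorem isLeast_minShift {t p c i : ℕ} (ht : 2 ≤ t) :
    IsLeast (shiftSet t p c i) (minShift t p c i) := by
  unfold shiftSet minShift maxShift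
  constructor
  · split_ifs <;> simp <;> omega
  · rintro x (⟨_, rfl⟩ | ⟨_, rfl⟩ | ⟨_, rfl⟩) <;> split_ifs <;> omega

theorem isGreatest_maxShift {t p c i : ℕ} (ht : 2 ≤ t) :
    IsGreatest (shiftSet t p c i) (maxShift t p i) := by
  unfold shiftSet maxShift
  constructor
  · split_ifs <;> simp <;> omega
  · rintro x (⟨_, rfl⟩ | ⟨_, rfl⟩ | ⟨_, rfl⟩) <;> split_ifs <;> omega

theorem minShift_of_lt {t p c j : ℕ} (h : j < c) : minShift t p c j = j + 1 := if_pos h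

theorem minShift_self (t p c : ℕ) : minShift t p c c = maxShift t p c := if_neg (lt_irrefl c)

theorem maxShift_mono {t t' : ℕ} (h : t ≤ t') (p j : ℕ) :
    maxShift t p j ≤ maxShift t' p j := by
  unfold maxShift; split_ifs <;> omega

theorem minShift_lt_maxShift {t p c i j : ℕ} (ht : 2 ≤ t) (hjc : j < c) (hji : j < i) :
    minShift t p c j < maxShift t p i := by
  rw [minShift_of_lt hjc]; unfold maxShift; split_ifs <;> omega

theorem cast_maxShift_two (p j : ℕ) :
    (maxShift 2 p j : ℚ) = j + 1 + if p < j then 1 else 0 := by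
  unfold maxShift
  split_ifs <;> first | omega | (push_cast [show 2 + j - 1 = j + 1 by omega]; ring)

end Shifts

section ShiftProduct

def shiftProduct (m M : ℕ → ℕ) (c i : ℕ) : ℚ :=
  (∏ j ∈ Ico 1 i, (m j : ℚ) / ((M i : ℚ) - (m j : ℚ))) *
    ∏ j ∈ Ioc i c, (m j : ℚ) / ((M j : ℚ) - (m i : ℚ))

theorem shiftProduct_congr {m M m' M' : ℕ → ℕ} {c i : ℕ}
    (hm : ∀ j, 1 ≤ j → j ≤ c → m j = m' j) (hM : ∀ j, 1 ≤ j → j ≤ c → M j = M' j)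
    (hi : 1 ≤ i) (hic : i ≤ c) : shiftProduct m M c i = shiftProduct m' M' c i := by
  unfold shiftProduct
  congr 1 <;> refine prod_congr rfl fun j hj => ?_ <;> simp only [mem_Ico, mem_Ioc] at hj
  · rw [hm j (by omega) (by omega), hM i hi hic]
  · rw [hm j (by omega) hj.2, hM j (by omega) hj.2, hm i hi hic]

theorem div_sub_le_div_sub_self {K : Type*} [Field K] [LinearOrder K] [IsStrictOrderedRing K]
    {b x y : K} (hb : 0 ≤ b) (hbx : b < x) (hxy : x ≤ y) : y / (y - b) ≤ x / (x - b) := by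
  rw [div_le_div_iff₀ (by linarith) (by linarith)]
  nlinarith

theorem shiftProduct_le_shiftProduct_two {t p c i : ℕ} (ht : 2 ≤ t) (hic : i ≤ c) :
    shiftProduct (minShift t p c) (maxShift t p) c i ≤
      shiftProduct (minShift 2 p c) (maxShift 2 p) c i := by
  have hsub : ∀ {a b : ℕ}, a < b → (0 : ℚ) < b - a :=
    fun h => sub_pos.2 (by exact_mod_cast h)
  have hmono : ∀ j, (maxShift 2 p j : ℚ) ≤ maxShift t p j := fun j => by
    exact_mod_cast maxShift_mono ht p j
  have hIco : ∀ s, 2 ≤ s → ∀ j ∈ Ico 1 i,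
      (0 : ℚ) ≤ minShift s p c j / (maxShift s p i - minShift s p c j) := fun s hs j hj => by
    rw [mem_Ico] at hj
    exact div_nonneg (Nat.cast_nonneg _) (hsub (minShift_lt_maxShift hs (by omega) hj.2)).le
  have hIoc : ∀ s, 2 ≤ s → ∀ j ∈ Ioc i c,
      (0 : ℚ) ≤ minShift s p c j / (maxShift s p j - minShift s p c i) := fun s hs j hj => by
    rw [mem_Ioc] at hj
    exact div_nonneg (Nat.cast_nonneg _) (hsub (minShift_lt_maxShift hs (by omega) hj.1)).le
  unfold shiftProduct
  refine mul_le_mul (prod_le_prod (hIco t ht) fun j hj => ?_)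
    (prod_le_prod (hIoc t ht) fun j hj => ?_) (prod_nonneg (hIoc t ht))
    (prod_nonneg (hIco 2 le_rfl)) <;> simp only [mem_Ico, mem_Ioc] at hj
  · have := hsub (minShift_lt_maxShift le_rfl (p := p) (by omega : j < c) hj.2)
    simp only [minShift_of_lt (by omega : j < c)] at this ⊢
    exact div_le_div_of_nonneg_left (Nat.cast_nonneg _) this (by linarith [hmono i])
  · have := hsub (minShift_lt_maxShift le_rfl (p := p) (by omega : i < c) hj.1)
    simp only [minShift_of_lt (by omega : i < c)] at this ⊢
    rcases hj.2.lt_or_eq with hjc | rfl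
    · simp only [minShift_of_lt hjc]
      exact div_le_div_of_nonneg_left (Nat.cast_nonneg _) this (by linarith [hmono j])
    · simp only [minShift_self]
      exact div_sub_le_div_sub_self (Nat.cast_nonneg _) (by linarith) (hmono j)

theorem prod_Ico_shift_two {p c i : ℕ} (hi : 1 ≤ i) (hic : i ≤ c) :
    ∏ j ∈ Ico 1 i, (minShift 2 p c j : ℚ) / (maxShift 2 p i - minShift 2 p c j) =
      if i ≤ p then (i : ℚ) else 1 := by
  set e : ℚ := if p < i then 1 else 0 with he
  calc _ = ∏ j ∈ Ico 1 i, ((j : ℚ) + 1) / (((i : ℚ) - j) + e) := by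
        refine prod_congr rfl fun j hj => ?_
        rw [minShift, if_pos (by simp at hj; omega), cast_maxShift_two]
        push_cast; ring
    _ = ∏ j ∈ Ico 1 i, ((j : ℚ) + 1) / (j + e) := prod_Ico_div_cast_sub _ (· + e)
    _ = _ := by
        by_cases hip : i ≤ p
        · rw [he, if_neg (by omega), if_pos hip]
          simpa using prod_Ico_succ_div_self hi
        · rw [he, if_pos (by omega), if_neg hip]
          exact prod_eq_one fun j _ => div_self (by positivity)

/-- The last factor `m c / (M c - m i)` with `m c = M c` is split as `(c+1)/(M c - m i)` times a
correction `m c / (c+1)`, so that all factors share the numerator `j + 1`. -/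
theorem prod_Ioc_shift_two {p c i : ℕ} (hic : i < c) (hpc : p ≤ c) :
    ∏ j ∈ Ioc i c, (minShift 2 p c j : ℚ) / (maxShift 2 p j - minShift 2 p c i) =
      (c + 1).choose (i + 1) * ((max p i : ℕ) - i + 1) / (c - i + 1) *
        ((c + 1 + if p < c then 1 else 0) / (c + 1)) := by
  set e : ℚ := if p < c then 1 else 0 with he
  have he0 : 0 ≤ e := by rw [he]; split_ifs <;> norm_num
  calc _ = ∏ j ∈ Ioc i c, ((j : ℚ) + 1) / (j - i + if max p i < j then 1 else 0) *
          (if j = c then (c + 1 + e) / (c + 1) else 1) := by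
        refine prod_congr rfl fun j hj => ?_
        simp only [mem_Ioc] at hj
        have hmax : (if max p i < j then (1 : ℚ) else 0) = if p < j then 1 else 0 := by
          simp [hj.1]
        rw [minShift_of_lt hic, hmax]
        rcases hj.2.lt_or_eq with hjc | rfl
        · rw [minShift_of_lt hjc, if_neg hjc.ne, cast_maxShift_two]
          push_cast; ring_nf
        · rw [minShift_self, if_pos rfl, cast_maxShift_two, ← he]
          have : (i : ℚ) < j := by exact_mod_cast hj.1
          have h1 : (j : ℚ) - i + e ≠ 0 := by linarith
          have h2 : (j : ℚ) + 1 ≠ 0 := by positivity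
          have h3 : (j : ℚ) + 1 + e - (i + 1) = j - i + e := by ring
          push_cast
          rw [h3]
          field_simp
    _ = _ := by
        rw [prod_mul_distrib, prod_ite_eq' _ _, if_pos (by simp [hic]),
          prod_Ioc_succ_div_sub_add_ite (le_max_right p i) (max_le hpc hic.le)]

theorem shiftProduct_two_self_le_bettiNumber {c p : ℕ} (hpc : p ≤ c) (hc : 1 ≤ c) :
    shiftProduct (minShift 2 p c) (maxShift 2 p) c c ≤ bettiNumber c p c := by
  unfold shiftProduct
  rw [prod_Ico_shift_two hc le_rfl, Ioc_self, prod_empty, mul_one]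
  push_cast [bettiNumber, betaCoeff, gammaCoeff, Nat.choose_succ_self]
  rcases hpc.lt_or_eq with hpc | rfl
  · have : (p : ℚ) + 1 ≤ c := by exact_mod_cast hpc
    simp only [if_neg hpc.not_ge, if_pos hpc, Nat.choose_self]
    push_cast; linarith
  · simp [cast_choose_pred_right hc le_rfl]

theorem shiftProduct_two_le_bettiNumber_of_lt {c p i : ℕ} (hpc : p ≤ c) (hi : 1 ≤ i)
    (hic : i < c) : shiftProduct (minShift 2 p c) (maxShift 2 p) c i ≤ bettiNumber c p i := by
  unfold shiftProduct
  rw [prod_Ico_shift_two hi hic.le, prod_Ioc_shift_two hic hpc]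
  push_cast [bettiNumber, betaCoeff, gammaCoeff]
  rw [cast_choose_succ_succ, cast_choose_succ_right hic.le, cast_choose_pred_right hi hic.le]
  have hK : (0 : ℚ) < c.choose i := by exact_mod_cast Nat.choose_pos hic.le
  have hi' : (1 : ℚ) ≤ i := by exact_mod_cast hi
  have hic' : (i : ℚ) + 1 ≤ c := by exact_mod_cast hic
  have hc : (c : ℚ) - i + 1 ≠ 0 := by linarith
  rcases hpc.lt_or_eq with hpc | rfl
  · have hpc' : (p : ℚ) + 1 ≤ c := by exact_mod_cast hpc
    by_cases hip : i ≤ p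
    · have hip' : (i : ℚ) ≤ p := by exact_mod_cast hip
      simp only [if_pos hip, if_neg hip.not_gt, if_pos hpc, max_eq_left hip', add_zero]
      -- the difference of the two sides is `i·C(c,i)·(c-p-1)/(i+1)`
      rw [← sub_nonneg]
      field_simp
      rw [zero_mul]
      refine div_nonneg (mul_nonneg (by positivity) ?_) (by linarith)
      nlinarith
    · have hip' : (p : ℚ) + 1 ≤ i := by exact_mod_cast (by omega : p + 1 ≤ i)
      simp only [if_neg hip, if_pos (not_le.1 hip), if_pos hpc,
        max_eq_right (by linarith : (p : ℚ) ≤ i), sub_self, add_zero, zero_add]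
      -- already the term `(i-p)·C(c,i)` dominates the left side
      have hcore : (c : ℚ) + 2 ≤ (i + 1) * (c - i + 1) := by nlinarith
      have hrest : 0 ≤ (i : ℚ) * (c - i) * (c - i + 1) :=
        mul_nonneg (mul_nonneg (by linarith) (by linarith)) (by linarith)
      have hdom : ((i : ℚ) + 1) * (c - i + 1) ≤ (i + 1) * (c - i + 1) * (i - p) :=
        le_mul_of_one_le_right (by nlinarith) (by linarith)
      rw [← sub_nonneg]
      field_simp
      rw [zero_mul]
      refine div_nonneg (mul_nonneg hK.le ?_) (by linarith)
      linarith
  · simp only [if_pos hic.le, if_neg hic.le.not_gt, if_neg (lt_irrefl _),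
      max_eq_left (by linarith : (i : ℚ) ≤ p)]
    apply le_of_eq
    field_simp
    ring

theorem shiftProduct_two_le_bettiNumber {c p i : ℕ} (hpc : p ≤ c) (hi : 1 ≤ i) (hic : i ≤ c) :
    shiftProduct (minShift 2 p c) (maxShift 2 p) c i ≤ bettiNumber c p i := by
  rcases hic.lt_or_eq with hic | rfl
  · exact shiftProduct_two_le_bettiNumber_of_lt hpc hi hic
  · exact shiftProduct_two_self_le_bettiNumber hpc hi

end ShiftProduct

theorem lower_bound_betti_divisor_minimal_degree_general (t c p : ℕ)
    (ht : 2 ≤ t) (hpc : p ≤ c)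
    (α β' γ B : ℕ → ℤ)
    (hα : ∀ i, α i = (i : ℤ) * (c.choose (i + 1)))
    (hβ1 : β' 1 = (p : ℤ))
    (hβ : ∀ i, 2 ≤ i → i ≤ p →
      β' i = (p : ℤ) * (c.choose (i - 1)) - (c : ℤ) * ((c - 1).choose (i - 2)))
    (hβ0 : ∀ i, p < i → β' i = 0)
    (hγ0 : ∀ i, i ≤ p → γ i = 0)
    (hγ : ∀ i, p < i → γ i = (c : ℤ) * ((c - 1).choose (i - 1)) - (p : ℤ) * (c.choose i))
    (hB : ∀ i, B i = α i + β' i + γ i)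
    (S : ℕ → Finset ℕ)
    (hS : ∀ i, S i =
      (if α i ≠ 0 then ({i + 1} : Finset ℕ) else ∅) ∪
      (if β' i ≠ 0 then ({t + i - 1} : Finset ℕ) else ∅) ∪
      (if γ i ≠ 0 then ({t + i} : Finset ℕ) else ∅))
    (m M : ℕ → ℕ)
    (hmmem : ∀ i, 1 ≤ i → i ≤ c → m i ∈ S i)
    (hmle : ∀ i, 1 ≤ i → i ≤ c → ∀ x ∈ S i, m i ≤ x)
    (hMmem : ∀ i, 1 ≤ i → i ≤ c → M i ∈ S i)
    (hMge : ∀ i, 1 ≤ i → i ≤ c → ∀ x ∈ S i, x ≤ M i) :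
    ∀ i, 1 ≤ i → i ≤ c →
      (∀ j, 1 ≤ j → j < i → m j < M i) ∧
      (∀ j, i < j → j ≤ c → m i < M j) ∧
      (∏ j ∈ Finset.Ico 1 i, (m j : ℚ) / ((M i : ℚ) - (m j : ℚ))) *
        (∏ j ∈ Finset.Ioc i c, (m j : ℚ) / ((M j : ℚ) - (m i : ℚ))) ≤ (B i : ℚ) := by
  have hβ' : ∀ j, 1 ≤ j → β' j = betaCoeff c p j := fun _ => eq_betaCoeff hβ1 hβ hβ0
  have hγ' : ∀ j, γ j = gammaCoeff c p j := eq_gammaCoeff hγ0 hγ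
  have hS' : ∀ j, 1 ≤ j → j ≤ c → (S j : Set ℕ) = shiftSet t p c j := fun j hj hjc => by
    rw [hS, coe_shiftFinset_eq (by rw [hα]; exact mul_choose_succ_ne_zero_iff hj)
      (by rw [hβ' j hj]; exact betaCoeff_ne_zero_iff hjc)
      (by rw [hγ' j]; exact gammaCoeff_ne_zero_iff hjc)]
  have hm : ∀ j, 1 ≤ j → j ≤ c → m j = minShift t p c j := fun j hj hjc =>
    IsLeast.unique ⟨hmmem j hj hjc, hmle j hj hjc⟩ (hS' j hj hjc ▸ isLeast_minShift ht)
  have hM : ∀ j, 1 ≤ j → j ≤ c → M j = maxShift t p j := fun j hj hjc =>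
    IsGreatest.unique ⟨hMmem j hj hjc, hMge j hj hjc⟩ (hS' j hj hjc ▸ isGreatest_maxShift ht)
  intro i hi hic
  refine ⟨fun j hj hji => ?_, fun j hij hjc => ?_, ?_⟩
  · rw [hm j hj (by omega), hM i hi hic]
    exact minShift_lt_maxShift ht (by omega) hji
  · rw [hm i hi hic, hM j (by omega) hjc]
    exact minShift_lt_maxShift ht (by omega) hij
  calc shiftProduct m M c i
      = shiftProduct (minShift t p c) (maxShift t p) c i := shiftProduct_congr hm hM hi hic
    _ ≤ shiftProduct (minShift 2 p c) (maxShift 2 p) c i :=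
        shiftProduct_le_shiftProduct_two ht hic
    _ ≤ bettiNumber c p i := shiftProduct_two_le_bettiNumber hpc hi hic
    _ = B i := by rw [hB, hα, hβ' i hi, hγ' i, bettiNumber]

/-- Theorem 3.8, lower bound, arithmetic form, for a reduced arithmetically
Cohen–Macaulay divisor of degree `d = tc+1−p` on a variety of minimal degree of
codimension `c`: for every `1 ≤ i ≤ c` the denominators `M i − m j` (for
`1 ≤ j < i`) and `M j − m i` (for `i < j ≤ c`) are positive and
`∏_{1≤j<i} m j/(M i − m j) · ∏_{i<j≤c} m j/(M j − m i) ≤ B i`, where `B i` is the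
`i`-th total Betti number. -/
theorem lower_bound_betti_divisor_minimal_degree (t c p : ℕ)
    (ht : 2 ≤ t) (hc : 1 ≤ c) (hp1 : 1 ≤ p) (hpc : p ≤ c)
    (α β' γ B : ℕ → ℤ)
    (hα : ∀ i, α i = (i : ℤ) * (c.choose (i + 1)))
    (hβ1 : β' 1 = (p : ℤ))
    (hβ : ∀ i, 2 ≤ i → i ≤ p →
      β' i = (p : ℤ) * (c.choose (i - 1)) - (c : ℤ) * ((c - 1).choose (i - 2)))
    (hβ0 : ∀ i, p < i → β' i = 0)
    (hγ0 : ∀ i, i ≤ p → γ i = 0)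
    (hγ : ∀ i, p < i → γ i = (c : ℤ) * ((c - 1).choose (i - 1)) - (p : ℤ) * (c.choose i))
    (hB : ∀ i, B i = α i + β' i + γ i)
    (S : ℕ → Finset ℕ)
    (hS : ∀ i, S i =
      (if α i ≠ 0 then ({i + 1} : Finset ℕ) else ∅) ∪
      (if β' i ≠ 0 then ({t + i - 1} : Finset ℕ) else ∅) ∪
      (if γ i ≠ 0 then ({t + i} : Finset ℕ) else ∅))
    (m M : ℕ → ℕ)
    (hmmem : ∀ i, 1 ≤ i → i ≤ c → m i ∈ S i)
    (hmle : ∀ i, 1 ≤ i → i ≤ c → ∀ x ∈ S i, m i ≤ x)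
    (hMmem : ∀ i, 1 ≤ i → i ≤ c → M i ∈ S i)
    (hMge : ∀ i, 1 ≤ i → i ≤ c → ∀ x ∈ S i, x ≤ M i) :
    ∀ i, 1 ≤ i → i ≤ c →
      (∀ j, 1 ≤ j → j < i → m j < M i) ∧
      (∀ j, i < j → j ≤ c → m i < M j) ∧
      (∏ j ∈ Finset.Ico 1 i, (m j : ℚ) / ((M i : ℚ) - (m j : ℚ))) *
        (∏ j ∈ Finset.Ioc i c, (m j : ℚ) / ((M j : ℚ) - (m i : ℚ))) ≤ (B i : ℚ) :=
  lower_bound_betti_divisor_minimal_degree_general t c p ht hpc α β' γ B hα hβ1 hβ hβ0 hγ0 hγ hB S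
    hS m M hmmem hmle hMmem hMge
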